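/- arXiv:1701.08514 — 2 statements merged into one kernel-verified Lean document; each statement's English description precedes it below -/
import Mathlib

section
/- (Existence of strong set Shapley equilibria.) For every zero-sum matrix game with vector payoffs there exists a pair (p̄,q̄) ∈ P × Q such that p̄ is minimal, q̄ is maximal, v(p̄,q̄) ∈ Max v_I(p̄) ∩ Min v_II(q̄), and moreover V_I(p̄) ∩ V_II(q̄) ⊆ Max v_I(p̄) ∩ Min v_II(q̄). -/
open Set

noncomputable section

/-- The mixed-strategy simplex in `ℝ^m`. -/
def simplex (m : ℕ) : Set (Fin m → ℝ) := {p | (∀ i, 0 ≤ p i) ∧ ∑ i, p i = 1}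

/-- Expected vector payoff `v(p,q) = Σ_i Σ_j p_i g_{ij} q_j`. -/
def payoff {K m n : ℕ} (g : Fin m → Fin n → (Fin K → ℝ)) (p : Fin m → ℝ) (q : Fin n → ℝ) :
    Fin K → ℝ := ∑ i, ∑ j, (p i * q j) • g i j

/-- `v_I(p) = {v(p,q) : q ∈ Q}`. -/
def vI {K m n : ℕ} (g : Fin m → Fin n → (Fin K → ℝ)) (p : Fin m → ℝ) : Set (Fin K → ℝ) :=
  {y | ∃ q ∈ simplex n, y = payoff g p q}

/-- `V_I(p) = v_I(p) - ℝ^K_+`. -/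
def VI {K m n : ℕ} (g : Fin m → Fin n → (Fin K → ℝ)) (p : Fin m → ℝ) : Set (Fin K → ℝ) :=
  {y | ∃ z ∈ vI g p, y ≤ z}

/-- `v_II(q) = {v(p,q) : p ∈ P}`. -/
def vII {K m n : ℕ} (g : Fin m → Fin n → (Fin K → ℝ)) (q : Fin n → ℝ) : Set (Fin K → ℝ) :=
  {y | ∃ p ∈ simplex m, y = payoff g p q}

/-- `V_II(q) = v_II(q) + ℝ^K_+`. -/
def VII {K m n : ℕ} (g : Fin m → Fin n → (Fin K → ℝ)) (q : Fin n → ℝ) : Set (Fin K → ℝ) :=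
  {y | ∃ z ∈ vII g q, z ≤ y}

/-- Maximal points of a set w.r.t. the componentwise order. -/
def maxSet {K : ℕ} (A : Set (Fin K → ℝ)) : Set (Fin K → ℝ) :=
  {z ∈ A | ∀ y ∈ A, z ≤ y → y = z}

/-- Minimal points of a set w.r.t. the componentwise order. -/
def minSet {K : ℕ} (A : Set (Fin K → ℝ)) : Set (Fin K → ℝ) :=
  {z ∈ A | ∀ y ∈ A, y ≤ z → y = z}

/-- `p̄` is a minimal strategy for player I: no `p ∈ P` with `V_I(p) ⊆ V_I(p̄)`
and `V_I(p) ≠ V_I(p̄)`. -/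
def MinimalStrat {K m n : ℕ} (g : Fin m → Fin n → (Fin K → ℝ)) (pbar : Fin m → ℝ) : Prop :=
  ∀ p ∈ simplex m, VI g p ⊆ VI g pbar → VI g p = VI g pbar

/-- `q̄` is a maximal strategy for player II: no `q ∈ Q` with `V_II(q) ⊆ V_II(q̄)`
and `V_II(q) ≠ V_II(q̄)`. -/
def MaximalStrat {K m n : ℕ} (g : Fin m → Fin n → (Fin K → ℝ)) (qbar : Fin n → ℝ) : Prop :=
  ∀ q ∈ simplex n, VII g q ⊆ VII g qbar → VII g q = VII g qbar

/-!
Summing the `K` coordinates turns the game into a scalar matrix game, which by von Neumann's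
minimax theorem has a saddle point `(p₀, q₀)` with some value `c`: `V_I(p₀)` lies below and
`V_II(q₀)` above the hyperplane `∑ₖ yₖ = c`. These properties pass to every `p` with
`V_I(p) ⊆ V_I(p₀)` and every `q` with `V_II(q) ⊆ V_II(q₀)`, and among these Zorn's lemma yields a
minimal `p̄` and a maximal `q̄`, because `{p | V_I(p) ⊆ V_I(p')}` is closed in the compact simplex.
A point of `V_I(p̄) ∩ V_II(q̄)` then has coordinate sum exactly `c`; as the coordinate sum is
strictly monotone, it is a maximal point of `v_I(p̄)` and a minimal point of `v_II(q̄)`.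
-/

open Matrix

section Minimax

variable {ι κ : Type*} [Fintype κ]

theorem Matrix.sub_const_mulVec_of_mem_stdSimplex (a : Matrix ι κ ℝ) (c : ℝ) {q : κ → ℝ}
    (hq : q ∈ stdSimplex ℝ κ) : (a - of fun _ _ => c) *ᵥ q = a *ᵥ q - fun _ => c := by
  ext i
  simp [mulVec, dotProduct, sub_mul, Finset.sum_sub_distrib, ← Finset.mul_sum, hq.2]

variable [Fintype ι]

theorem dotProduct_le_of_mem_stdSimplex {w x : ι → ℝ} {c : ℝ} (hw : w ∈ stdSimplex ℝ ι)
    (hx : ∀ i, x i ≤ c) : w ⬝ᵥ x ≤ c :=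
  calc w ⬝ᵥ x ≤ ∑ i, w i * c :=
        Finset.sum_le_sum fun i _ => mul_le_mul_of_nonneg_left (hx i) (hw.1 i)
    _ = c := by rw [← Finset.sum_mul, hw.2, one_mul]

theorem le_dotProduct_of_mem_stdSimplex {w x : ι → ℝ} {c : ℝ} (hw : w ∈ stdSimplex ℝ ι)
    (hx : ∀ i, c ≤ x i) : c ≤ w ⬝ᵥ x :=
  calc c = ∑ i, w i * c := by rw [← Finset.sum_mul, hw.2, one_mul]
    _ ≤ w ⬝ᵥ x := Finset.sum_le_sum fun i _ => mul_le_mul_of_nonneg_left (hx i) (hw.1 i)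

theorem Matrix.exists_nonneg_mulVec_or_dotProduct_mulVec_neg [Nonempty κ] (A : Matrix ι κ ℝ) :
    (∃ q ∈ stdSimplex ℝ κ, 0 ≤ A *ᵥ q) ∨
      ∃ p ∈ stdSimplex ℝ ι, ∀ q ∈ stdSimplex ℝ κ, p ⬝ᵥ (A *ᵥ q) < 0 := by
  classical
  refine or_iff_not_imp_left.2 fun h => ?_
  have hdisj : Disjoint (A.mulVecLin '' stdSimplex ℝ κ) (ProperCone.positive ℝ (ι → ℝ)) := by
    rw [Set.disjoint_left]
    rintro _ ⟨q, hq, rfl⟩ hpos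
    exact h ⟨q, hq, hpos⟩
  obtain ⟨f, hf_nonneg, hf_neg⟩ := (ProperCone.positive ℝ (ι → ℝ)).hyperplane_separation
    ((convex_stdSimplex ℝ κ).linear_image _)
    ((isCompact_stdSimplex ℝ κ).image A.mulVecLin.continuous_of_finiteDimensional) hdisj
  -- `f ≥ 0` on the orthant, so its normalized weights form a mixed strategy.
  set w : ι → ℝ := fun i => f (Pi.single i 1)
  have hf : ∀ x, f x = x ⬝ᵥ w := fun x => by
    conv_lhs => rw [← Finset.univ_sum_single x]
    simp only [map_sum, dotProduct]
    refine Finset.sum_congr rfl fun i _ => ?_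
    rw [← smul_eq_mul, ← map_smul, ← Pi.single_smul', smul_eq_mul, mul_one]
  have hw : ∀ i, 0 ≤ w i := fun i => hf_nonneg _ (Pi.single_nonneg.2 zero_le_one)
  have hAq : ∀ q ∈ stdSimplex ℝ κ, (A *ᵥ q) ⬝ᵥ w < 0 := fun q hq => by
    simpa [hf] using hf_neg _ ⟨q, hq, rfl⟩
  have hsum : 0 < ∑ i, w i := by
    refine (Finset.sum_nonneg fun i _ => hw i).lt_of_ne fun h0 => ?_
    have hw0 : w = 0 := funext fun i =>
      (Finset.sum_eq_zero_iff_of_nonneg fun i _ => hw i).1 h0.symm i (Finset.mem_univ i)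
    simpa [hw0] using hAq _ (single_mem_stdSimplex ℝ (Classical.arbitrary κ))
  refine ⟨(∑ i, w i)⁻¹ • w, ⟨fun i => ?_, ?_⟩, fun q hq => ?_⟩
  · exact mul_nonneg (inv_nonneg.2 hsum.le) (hw i)
  · simp [← Finset.mul_sum, hsum.ne']
  · rw [smul_dotProduct, dotProduct_comm, smul_eq_mul]
    exact mul_neg_of_pos_of_neg (inv_pos.2 hsum) (hAq q hq)

theorem Matrix.exists_saddle_value [Nonempty ι] [Nonempty κ] (a : Matrix ι κ ℝ) :
    ∃ c, ∃ p ∈ stdSimplex ℝ ι, ∃ q ∈ stdSimplex ℝ κ,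
      (∀ q' ∈ stdSimplex ℝ κ, p ⬝ᵥ (a *ᵥ q') ≤ c) ∧ ∀ p' ∈ stdSimplex ℝ ι, c ≤ p' ⬝ᵥ (a *ᵥ q) := by
  classical
  let bestReply : (ι → ℝ) → ℝ := fun p => Finset.univ.sup' Finset.univ_nonempty (p ᵥ* a)
  obtain ⟨p, hp, hmin⟩ := (isCompact_stdSimplex ℝ ι).exists_isMinOn
    ⟨_, single_mem_stdSimplex ℝ (Classical.arbitrary ι)⟩
    (f := bestReply) (by fun_prop)
  set c := bestReply p
  -- A strategy `p'` as in the second alternative for `a - c` would have a best reply below `c`.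
  have hp_le : ∀ q' ∈ stdSimplex ℝ κ, p ⬝ᵥ (a *ᵥ q') ≤ c := fun q' hq' => by
    rw [dotProduct_mulVec, dotProduct_comm]
    exact dotProduct_le_of_mem_stdSimplex hq' fun j => Finset.le_sup' (p ᵥ* a) (Finset.mem_univ j)
  rcases (a - of fun _ _ => c).exists_nonneg_mulVec_or_dotProduct_mulVec_neg with
    ⟨q, hq, hq_nonneg⟩ | ⟨p', hp', hp'_neg⟩
  · refine ⟨c, p, hp, q, hq, hp_le, fun p' hp' => le_dotProduct_of_mem_stdSimplex hp' fun i => ?_⟩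
    simpa [sub_const_mulVec_of_mem_stdSimplex a c hq] using hq_nonneg i
  · have : bestReply p' < c := (Finset.sup'_lt_iff _).2 fun j _ => by
      simpa [sub_const_mulVec_of_mem_stdSimplex a c (single_mem_stdSimplex ℝ j), vecMul,
        dotProduct, mul_sub, Finset.sum_sub_distrib, ← Finset.sum_mul, hp'.2]
        using hp'_neg _ (single_mem_stdSimplex ℝ j)
    exact absurd (hmin hp') this.not_ge

end Minimax

section Topology

variable {α : Type*} [TopologicalSpace α] [Preorder α] [OrderClosedTopology α] {s : Set α}

theorem IsCompact.isClosed_lowerClosure (hs : IsCompact s) : IsClosed (lowerClosure s : Set α) := by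
  have : CompactSpace s := isCompact_iff_compactSpace.1 hs
  have hfst : (lowerClosure s : Set α) = Prod.fst '' {x : α × s | x.1 ≤ x.2} := by
    ext y; simp [mem_lowerClosure]
  rw [hfst]
  exact isClosedMap_fst_of_compactSpace _
    (isClosed_le continuous_fst (continuous_subtype_val.comp continuous_snd))

theorem IsCompact.isClosed_upperClosure (hs : IsCompact s) : IsClosed (upperClosure s : Set α) := by
  have : CompactSpace s := isCompact_iff_compactSpace.1 hs
  have hfst : (upperClosure s : Set α) = Prod.fst '' {x : α × s | (x.2 : α) ≤ x.1} := by
    ext y; simp [mem_upperClosure]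
  rw [hfst]
  exact isClosedMap_fst_of_compactSpace _
    (isClosed_le (continuous_subtype_val.comp continuous_snd) continuous_fst)

end Topology

theorem IsCompact.exists_minimal_subset_image {X β : Type*} [TopologicalSpace X] {S : Set X}
    (hS : IsCompact S) {f : X → Set β} (hf : ∀ x ∈ S, IsClosed {y ∈ S | f y ⊆ f x})
    {x₀ : X} (hx₀ : x₀ ∈ S) : ∃ x ∈ S, f x ⊆ f x₀ ∧ ∀ y ∈ S, f y ⊆ f x → f y = f x := by
  let T := {x // x ∈ S ∧ f x ⊆ f x₀}
  have : Nonempty T := ⟨⟨x₀, hx₀, subset_rfl⟩⟩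
  have hchain : ∀ c : Set T, IsChain (fun a b : T => f b.1 ⊆ f a.1) c → c.Nonempty →
      ∃ ub : T, ∀ a ∈ c, f ub.1 ⊆ f a.1 := by
    intro c hc hne
    have : Nonempty c := hne.to_subtype
    let D : c → Set X := fun a => {y ∈ S | f y ⊆ f a.1.1}
    have hdir : Directed (· ⊇ ·) D := by
      rintro ⟨a, ha⟩ ⟨b, hb⟩
      rcases eq_or_ne a b with rfl | hab
      · exact ⟨⟨a, ha⟩, subset_rfl, subset_rfl⟩
      rcases hc ha hb hab with h | h
      · exact ⟨⟨b, hb⟩, fun y hy => ⟨hy.1, hy.2.trans h⟩, subset_rfl⟩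
      · exact ⟨⟨a, ha⟩, subset_rfl, fun y hy => ⟨hy.1, hy.2.trans h⟩⟩
    obtain ⟨y, hy⟩ := IsCompact.nonempty_iInter_of_directed_nonempty_isCompact_isClosed D hdir
      (fun a => ⟨a.1.1, a.1.2.1, subset_rfl⟩)
      (fun a => hS.of_isClosed_subset (hf _ a.1.2.1) fun _ hy => hy.1) (fun a => hf _ a.1.2.1)
    rw [mem_iInter] at hy
    obtain ⟨a₀, ha₀⟩ := hne
    exact ⟨⟨y, (hy ⟨a₀, ha₀⟩).1, (hy ⟨a₀, ha₀⟩).2.trans a₀.2.2⟩, fun a ha => (hy ⟨a, ha⟩).2⟩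
  obtain ⟨⟨x, hxS, hx⟩, hmax⟩ :=
    exists_maximal_of_nonempty_chains_bounded hchain fun hab hbc => hbc.trans hab
  exact ⟨x, hxS, hx, fun y hyS hyx => hyx.antisymm (hmax ⟨y, hyS, hyx.trans hx⟩ hyx)⟩

theorem eq_of_le_of_sum_le {ι M : Type*} [Fintype ι] [AddCommMonoid M] [PartialOrder M]
    [IsOrderedCancelAddMonoid M] {x y : ι → M} (hxy : x ≤ y)
    (h : ∑ i, y i ≤ ∑ i, x i) : x = y :=
  funext fun i => (Finset.sum_eq_sum_iff_of_le fun i _ => hxy i).1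
    ((Finset.sum_le_sum fun i _ => hxy i).antisymm h) i (Finset.mem_univ i)

theorem lowerClosure_inter_upperClosure_subset_maxSet_inter_minSet {K : ℕ}
    {A B : Set (Fin K → ℝ)} {c : ℝ} (hA : ∀ a ∈ A, ∑ k, a k ≤ c) (hB : ∀ b ∈ B, c ≤ ∑ k, b k) :
    (lowerClosure A : Set (Fin K → ℝ)) ∩ upperClosure B ⊆ maxSet A ∩ minSet B := by
  rintro x ⟨hxA, hxB⟩
  obtain ⟨a, ha, hxa⟩ := mem_lowerClosure.1 hxA
  obtain ⟨b, hb, hbx⟩ := mem_upperClosure.1 hxB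
  have hx : ∑ k, x k = c := le_antisymm
    ((Finset.sum_le_sum fun k _ => hxa k).trans (hA a ha))
    ((hB b hb).trans (Finset.sum_le_sum fun k _ => hbx k))
  refine ⟨⟨?_, fun y hy hxy => (eq_of_le_of_sum_le hxy (hx ▸ hA y hy)).symm⟩,
    ⟨?_, fun y hy hyx => eq_of_le_of_sum_le hyx (hx ▸ hB y hy)⟩⟩
  · rwa [eq_of_le_of_sum_le hxa (hx ▸ hA a ha)]
  · rwa [← eq_of_le_of_sum_le hbx (hx ▸ hB b hb)]

section VectorGame

variable {K m n : ℕ} (g : Fin m → Fin n → Fin K → ℝ)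

theorem continuous_payoff_left (q : Fin n → ℝ) : Continuous fun p => payoff g p q := by
  unfold payoff; fun_prop

theorem continuous_payoff_right (p : Fin m → ℝ) : Continuous (payoff g p) := by
  unfold payoff; fun_prop

theorem sum_payoff (p : Fin m → ℝ) (q : Fin n → ℝ) :
    ∑ k, payoff g p q k = p ⬝ᵥ (Matrix.of (fun i j => ∑ k, g i j k) *ᵥ q) := by
  simp only [payoff, Finset.sum_apply, Pi.smul_apply, smul_eq_mul, dotProduct, mulVec, of_apply,
    Finset.mul_sum, Finset.sum_mul]
  rw [Finset.sum_comm]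
  refine Finset.sum_congr rfl fun i _ => ?_
  rw [Finset.sum_comm]
  exact Finset.sum_congr rfl fun j _ => Finset.sum_congr rfl fun k _ => by ring

theorem vI_eq_image (p : Fin m → ℝ) : vI g p = payoff g p '' simplex n := by
  ext y; simp [vI, eq_comm]

theorem vII_eq_image (q : Fin n → ℝ) : vII g q = (payoff g · q) '' simplex m := by
  ext y; simp [vII, eq_comm]

theorem vI_subset_VI (p : Fin m → ℝ) : vI g p ⊆ VI g p := fun y hy => ⟨y, hy, le_rfl⟩

theorem vII_subset_VII (q : Fin n → ℝ) : vII g q ⊆ VII g q := fun y hy => ⟨y, hy, le_rfl⟩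

theorem VI_eq_lowerClosure (p : Fin m → ℝ) : VI g p = lowerClosure (vI g p) := by
  ext y; simp [VI, mem_lowerClosure]

theorem VII_eq_upperClosure (q : Fin n → ℝ) : VII g q = upperClosure (vII g q) := by
  ext y; simp [VII, mem_upperClosure]

theorem isClosed_VI (p : Fin m → ℝ) : IsClosed (VI g p) := by
  rw [VI_eq_lowerClosure, vI_eq_image]
  exact ((isCompact_stdSimplex ℝ _).image (continuous_payoff_right g p)).isClosed_lowerClosure

theorem isClosed_VII (q : Fin n → ℝ) : IsClosed (VII g q) := by
  rw [VII_eq_upperClosure, vII_eq_image]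
  exact ((isCompact_stdSimplex ℝ _).image (continuous_payoff_left g q)).isClosed_upperClosure

theorem VI_subset_VI_iff {p p' : Fin m → ℝ} :
    VI g p ⊆ VI g p' ↔ ∀ q ∈ simplex n, payoff g p q ∈ VI g p' := by
  refine ⟨fun h q hq => h (vI_subset_VI g p ⟨q, hq, rfl⟩), ?_⟩
  rintro h y ⟨_, ⟨q, hq, rfl⟩, hy⟩
  obtain ⟨z, hz, hle⟩ := h q hq
  exact ⟨z, hz, hy.trans hle⟩

theorem VII_subset_VII_iff {q q' : Fin n → ℝ} :
    VII g q ⊆ VII g q' ↔ ∀ p ∈ simplex m, payoff g p q ∈ VII g q' := by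
  refine ⟨fun h p hp => h (vII_subset_VII g q ⟨p, hp, rfl⟩), ?_⟩
  rintro h y ⟨_, ⟨p, hp, rfl⟩, hy⟩
  obtain ⟨z, hz, hle⟩ := h p hp
  exact ⟨z, hz, hle.trans hy⟩

theorem isClosed_setOf_VI_subset (p' : Fin m → ℝ) :
    IsClosed {p ∈ simplex m | VI g p ⊆ VI g p'} := by
  have : {p ∈ simplex m | VI g p ⊆ VI g p'} =
      simplex m ∩ ⋂ q ∈ simplex n, (payoff g · q) ⁻¹' VI g p' := by
    ext p; simp [VI_subset_VI_iff]
  rw [this]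
  exact (isClosed_stdSimplex ℝ _).inter <|
    isClosed_biInter fun q _ => (isClosed_VI g p').preimage (continuous_payoff_left g q)

theorem isClosed_setOf_VII_subset (q' : Fin n → ℝ) :
    IsClosed {q ∈ simplex n | VII g q ⊆ VII g q'} := by
  have : {q ∈ simplex n | VII g q ⊆ VII g q'} =
      simplex n ∩ ⋂ p ∈ simplex m, payoff g p ⁻¹' VII g q' := by
    ext q; simp [VII_subset_VII_iff]
  rw [this]
  exact (isClosed_stdSimplex ℝ _).inter <|
    isClosed_biInter fun p _ => (isClosed_VII g q').preimage (continuous_payoff_right g p)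

theorem exists_minimalStrat_VI_subset {p₀ : Fin m → ℝ} (hp₀ : p₀ ∈ simplex m) :
    ∃ p ∈ simplex m, VI g p ⊆ VI g p₀ ∧ MinimalStrat g p :=
  (isCompact_stdSimplex ℝ _).exists_minimal_subset_image
    (fun p' _ => isClosed_setOf_VI_subset g p') hp₀

theorem exists_maximalStrat_VII_subset {q₀ : Fin n → ℝ} (hq₀ : q₀ ∈ simplex n) :
    ∃ q ∈ simplex n, VII g q ⊆ VII g q₀ ∧ MaximalStrat g q :=
  (isCompact_stdSimplex ℝ _).exists_minimal_subset_image
    (fun q' _ => isClosed_setOf_VII_subset g q') hq₀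

theorem exists_VI_sum_le_and_VII_le_sum (hm : 0 < m) (hn : 0 < n) :
    ∃ c, ∃ p ∈ simplex m, ∃ q ∈ simplex n,
      (∀ y ∈ VI g p, ∑ k, y k ≤ c) ∧ ∀ y ∈ VII g q, c ≤ ∑ k, y k := by
  have := Fin.pos_iff_nonempty.1 hm
  have := Fin.pos_iff_nonempty.1 hn
  obtain ⟨c, p, hp, q, hq, hpc, hqc⟩ := (Matrix.of fun i j => ∑ k, g i j k).exists_saddle_value
  refine ⟨c, p, hp, q, hq, ?_, ?_⟩
  · rintro y ⟨_, ⟨q', hq', rfl⟩, hy⟩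
    exact (Finset.sum_le_sum fun k _ => hy k).trans ((sum_payoff g p q').symm ▸ hpc q' hq')
  · rintro y ⟨_, ⟨p', hp', rfl⟩, hy⟩
    exact ((sum_payoff g p' q).symm ▸ hqc p' hp').trans (Finset.sum_le_sum fun k _ => hy k)

end VectorGame

theorem stmt4_general {K m n : ℕ} (hm : 0 < m) (hn : 0 < n)
    (g : Fin m → Fin n → (Fin K → ℝ)) :
    ∃ pbar ∈ simplex m, ∃ qbar ∈ simplex n,
      MinimalStrat g pbar ∧ MaximalStrat g qbar ∧
      payoff g pbar qbar ∈ maxSet (vI g pbar) ∩ minSet (vII g qbar) ∧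
      VI g pbar ∩ VII g qbar ⊆ maxSet (vI g pbar) ∩ minSet (vII g qbar) := by
  obtain ⟨c, p₀, hp₀, q₀, hq₀, hp₀c, hq₀c⟩ := exists_VI_sum_le_and_VII_le_sum g hm hn
  obtain ⟨pbar, hpbar, hVI, hpmin⟩ := exists_minimalStrat_VI_subset g hp₀
  obtain ⟨qbar, hqbar, hVII, hqmax⟩ := exists_maximalStrat_VII_subset g hq₀
  have hsub : VI g pbar ∩ VII g qbar ⊆ maxSet (vI g pbar) ∩ minSet (vII g qbar) := by
    rw [VI_eq_lowerClosure, VII_eq_upperClosure]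
    exact lowerClosure_inter_upperClosure_subset_maxSet_inter_minSet
      (fun y hy => hp₀c y (hVI (vI_subset_VI g pbar hy)))
      (fun y hy => hq₀c y (hVII (vII_subset_VII g qbar hy)))
  exact ⟨pbar, hpbar, qbar, hqbar, hpmin, hqmax,
    hsub ⟨vI_subset_VI g pbar ⟨qbar, hqbar, rfl⟩, vII_subset_VII g qbar ⟨pbar, hpbar, rfl⟩⟩, hsub⟩

theorem stmt4 {K m n : ℕ} (hK : 0 < K) (hm : 0 < m) (hn : 0 < n)
    (g : Fin m → Fin n → (Fin K → ℝ)) :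
    ∃ pbar ∈ simplex m, ∃ qbar ∈ simplex n,
      MinimalStrat g pbar ∧ MaximalStrat g qbar ∧
      payoff g pbar qbar ∈ maxSet (vI g pbar) ∩ minSet (vII g qbar) ∧
      VI g pbar ∩ VII g qbar ⊆ maxSet (vI g pbar) ∩ minSet (vII g qbar) :=
  stmt4_general hm hn g
end
end

section
/- For every p ∈ P one has ∩_{q∈Q} [v(p,q) + ℝ^K_+] = ∩_{j=1}^n [Σ_{i=1}^m p_i g_{ij} + ℝ^K_+]. Moreover, the set 𝒲_I = ∪_{p∈P} ∩_{j=1}^n [Σ_{i=1}^m p_i g_{ij} + ℝ^K_+] is a closed convex subset of ℝ^K, so that the closed convex hull may be omitted in the lattice infimum formula: inf_{p∈P} sup_{q∈Q} [v(p,q) + ℝ^K_+] = ∪_{p∈P} ∩_{q∈Q} [v(p,q) + ℝ^K_+]. -/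
open Set

noncomputable section

lemma payoff_eq' {K m n : ℕ} (g : Fin m → Fin n → (Fin K → ℝ)) (p : Fin m → ℝ) (q : Fin n → ℝ) :
    payoff g p q = ∑ j, q j • (∑ i, p i • g i j) := by
  unfold payoff
  rw [Finset.sum_comm]
  refine Finset.sum_congr rfl fun j _ => ?_
  rw [Finset.smul_sum]
  refine Finset.sum_congr rfl fun i _ => ?_
  rw [smul_smul, mul_comm]

lemma pure_mem' {n : ℕ} (j : Fin n) : (fun j' => if j' = j then (1:ℝ) else 0) ∈ simplex n := by
  constructor
  · intro i; dsimp only; split <;> norm_num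
  · simp

lemma payoff_pure' {K m n : ℕ} (g : Fin m → Fin n → (Fin K → ℝ)) (p : Fin m → ℝ) (j : Fin n) :
    payoff g p (fun j' => if j' = j then (1:ℝ) else 0) = ∑ i, p i • g i j := by
  rw [payoff_eq']
  rw [Finset.sum_eq_single j]
  · simp
  · intro b _ hb; simp [hb]
  · simp

lemma isCompact_simplex' (m : ℕ) : IsCompact (simplex m) := by
  have hsub : simplex m ⊆ Icc (0 : Fin m → ℝ) 1 := by
    rintro p ⟨h0, h1⟩
    refine ⟨fun i => h0 i, fun i => ?_⟩
    calc p i ≤ ∑ i', p i' := Finset.single_le_sum (fun i' _ => h0 i') (Finset.mem_univ i)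
    _ = 1 := h1
  have hcl : IsClosed (simplex m) := by
    have h1 : IsClosed {p : Fin m → ℝ | ∀ i, 0 ≤ p i} := by
      have : {p : Fin m → ℝ | ∀ i, 0 ≤ p i} = ⋂ i, {p : Fin m → ℝ | 0 ≤ p i} := by
        ext p; simp [Set.mem_iInter]
      rw [this]
      exact isClosed_iInter fun i => isClosed_le continuous_const (continuous_apply i)
    have hc : Continuous fun p : Fin m → ℝ => ∑ i, p i :=
      continuous_finset_sum _ fun i _ => continuous_apply i
    have h2 : IsClosed {p : Fin m → ℝ | ∑ i, p i = 1} := isClosed_eq hc continuous_const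
    exact (h1.inter h2 : _)
  exact (isCompact_Icc).of_isClosed_subset hcl hsub

theorem stmt16 {K m n : ℕ} (hK : 0 < K) (hm : 0 < m) (hn : 0 < n)
    (g : Fin m → Fin n → (Fin K → ℝ)) :
    (∀ p ∈ simplex m,
      (⋂ q ∈ simplex n, {y : Fin K → ℝ | payoff g p q ≤ y}) =
        ⋂ j : Fin n, {y : Fin K → ℝ | (∑ i, p i • g i j) ≤ y}) ∧
    IsClosed (⋃ p ∈ simplex m, ⋂ j : Fin n, {y : Fin K → ℝ | (∑ i, p i • g i j) ≤ y}) ∧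
    Convex ℝ (⋃ p ∈ simplex m, ⋂ j : Fin n, {y : Fin K → ℝ | (∑ i, p i • g i j) ≤ y}) ∧
    closure (convexHull ℝ
        (⋃ p ∈ simplex m, ⋂ q ∈ simplex n, {y : Fin K → ℝ | payoff g p q ≤ y})) =
      ⋃ p ∈ simplex m, ⋂ q ∈ simplex n, {y : Fin K → ℝ | payoff g p q ≤ y} := by
  have part1 : ∀ p ∈ simplex m,
      (⋂ q ∈ simplex n, {y : Fin K → ℝ | payoff g p q ≤ y}) =
        ⋂ j : Fin n, {y : Fin K → ℝ | (∑ i, p i • g i j) ≤ y} := by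
    intro p hp
    ext y
    simp only [mem_iInter, mem_setOf_eq]
    constructor
    · intro h j
      have := h _ (pure_mem' j)
      rwa [payoff_pure'] at this
    · intro h q hq
      rw [payoff_eq']
      intro k
      have hle : ∀ j, (∑ i, p i • g i j) k ≤ y k := fun j => h j k
      calc (∑ j, q j • (∑ i, p i • g i j)) k
          = ∑ j, q j * (∑ i, p i • g i j) k := by simp [Finset.sum_apply]
        _ ≤ ∑ j, q j * y k := Finset.sum_le_sum fun j _ =>
            mul_le_mul_of_nonneg_left (hle j) (hq.1 j)
        _ = (∑ j, q j) * y k := by rw [Finset.sum_mul]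
        _ = y k := by rw [hq.2, one_mul]
  set W := (⋃ p ∈ simplex m, ⋂ j : Fin n, {y : Fin K → ℝ | (∑ i, p i • g i j) ≤ y}) with hW
  have hWmem : ∀ y, y ∈ W ↔ ∃ p ∈ simplex m, ∀ j, (∑ i, p i • g i j) ≤ y := by
    intro y; simp only [hW, mem_iUnion, mem_iInter, mem_setOf_eq, exists_prop]
  have hclosed : IsClosed W := by
    haveI : CompactSpace (simplex m) := isCompact_iff_compactSpace.mp (isCompact_simplex' m)
    have hS : IsClosed {x : ↥(simplex m) × (Fin K → ℝ) |
        ∀ j, (∑ i, (x.1 : Fin m → ℝ) i • g i j) ≤ x.2} := by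
      have heq : {x : ↥(simplex m) × (Fin K → ℝ) |
            ∀ j, (∑ i, (x.1 : Fin m → ℝ) i • g i j) ≤ x.2}
          = ⋂ j, ⋂ k, {x : ↥(simplex m) × (Fin K → ℝ) |
              (∑ i, (x.1 : Fin m → ℝ) i • g i j) k ≤ x.2 k} := by
        ext x; simp [Set.mem_iInter, Pi.le_def]
      rw [heq]
      refine isClosed_iInter fun j => isClosed_iInter fun k => isClosed_le ?_ ?_
      · have heq2 : (fun x : ↥(simplex m) × (Fin K → ℝ) =>
              (∑ i, (x.1 : Fin m → ℝ) i • g i j) k)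
            = fun x : ↥(simplex m) × (Fin K → ℝ) =>
              ∑ i, (x.1 : Fin m → ℝ) i * g i j k := by
          ext x; simp [Finset.sum_apply]
        rw [heq2]
        refine continuous_finset_sum _ fun i _ => ?_
        exact (((continuous_apply i).comp continuous_subtype_val).comp
          continuous_fst).mul continuous_const
      · exact (continuous_apply k).comp continuous_snd
    have himg : W = Prod.snd '' {x : ↥(simplex m) × (Fin K → ℝ) |
        ∀ j, (∑ i, (x.1 : Fin m → ℝ) i • g i j) ≤ x.2} := by
      ext y
      rw [hWmem]
      constructor
      · rintro ⟨p, hp, h⟩; exact ⟨(⟨p, hp⟩, y), h, rfl⟩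
      · rintro ⟨⟨⟨p, hp⟩, y'⟩, h, rfl⟩; exact ⟨p, hp, h⟩
    rw [himg]
    exact isClosedMap_snd_of_compactSpace _ hS
  have hconv : Convex ℝ W := by
    intro y1 hy1 y2 hy2 a b ha hb hab
    rw [hWmem] at hy1 hy2
    rw [hWmem]
    obtain ⟨p1, hp1, h1⟩ := hy1
    obtain ⟨p2, hp2, h2⟩ := hy2
    refine ⟨a • p1 + b • p2, ⟨fun i => ?_, ?_⟩, fun j => ?_⟩
    · exact add_nonneg (mul_nonneg ha (hp1.1 i)) (mul_nonneg hb (hp2.1 i))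
    · simp only [Pi.add_apply, Pi.smul_apply, smul_eq_mul, Finset.sum_add_distrib,
        ← Finset.mul_sum, hp1.2, hp2.2, mul_one]
      exact hab
    · have heq3 : (∑ i, (a • p1 + b • p2) i • g i j)
          = a • (∑ i, p1 i • g i j) + b • (∑ i, p2 i • g i j) := by
        rw [Finset.smul_sum, Finset.smul_sum, ← Finset.sum_add_distrib]
        refine Finset.sum_congr rfl fun i _ => ?_
        simp [add_smul, smul_smul]
      rw [heq3]
      exact add_le_add (smul_le_smul_of_nonneg_left (h1 j) ha)
        (smul_le_smul_of_nonneg_left (h2 j) hb)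
  have hWeq : (⋃ p ∈ simplex m, ⋂ q ∈ simplex n, {y : Fin K → ℝ | payoff g p q ≤ y}) = W := by
    rw [hW]
    exact iUnion_congr fun p => iUnion_congr fun hp => part1 p hp
  refine ⟨part1, hclosed, hconv, ?_⟩
  rw [hWeq, hconv.convexHull_eq, hclosed.closure_eq]
end
end
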